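/- arXiv:1911.08254 — 5 statements merged into one kernel-verified Lean document; each statement's English description precedes it below -/
import Mathlib

section
/- Let A be a C*-algebra, a ∈ A an arbitrary element, and p, q ∈ A two projections. If a = a p q, then a = a p. -/
/-! Put `b := a - a * p`. Since `p` is a projection, `b * b⋆ = a * a⋆ - a * p * a⋆`.
From `a = a * p * q` we get `a * q = a` and `a⋆ = q * p * a⋆`, whence
`a * p * a⋆ = a * q * p * a⋆ = a * a⋆`. So `b * b⋆ = 0`, and the C⋆-identity gives `b = 0`. -/

section StarRing

variable {R : Type*} [NonUnitalRing R] [StarRing R] {p : R}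

lemma IsStarProjection.sub_mul_mul_star_sub (hp : IsStarProjection p) (a : R) :
    (a - a * p) * star (a - a * p) = a * star a - a * p * star a := by
  have hpp : a * p * (p * star a) = a * p * star a := by
    rw [← mul_assoc, mul_assoc a, hp.isIdempotentElem.eq]
  rw [star_sub, star_mul, hp.isSelfAdjoint.star_eq, mul_sub, sub_mul, sub_mul, hpp,
    ← mul_assoc]
  abel

lemma mul_star_self_eq_of_eq_mul_mul {a q : R} (hp : IsSelfAdjoint p) (hq : IsStarProjection q)
    (h : a = a * p * q) : a * p * star a = a * star a := by
  have haq : a * q = a := by rw [h, mul_assoc _ q, hq.isIdempotentElem.eq]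
  have hstar : star a = q * p * star a := by
    conv_lhs => rw [h]
    rw [star_mul, star_mul, hp.star_eq, hq.isSelfAdjoint.star_eq, mul_assoc]
  calc a * p * star a = a * q * p * star a := by rw [haq]
    _ = a * star a := by rw [mul_assoc, mul_assoc, ← mul_assoc q, ← hstar]

end StarRing

lemma IsStarProjection.mul_eq_left_iff_mul_mul_star_eq {E : Type*} [NonUnitalNormedRing E]
    [StarRing E] [CStarRing E] {p : E} (hp : IsStarProjection p) (a : E) :
    a * p = a ↔ a * p * star a = a * star a := by
  refine ⟨fun h ↦ by rw [h], fun h ↦ ?_⟩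
  have h0 : (a - a * p) * star (a - a * p) = 0 := by
    rw [hp.sub_mul_mul_star_sub, h, sub_self]
  rw [CStarRing.mul_star_self_eq_zero_iff, sub_eq_zero] at h0
  exact h0.symm

theorem cstar_apq_general {A : Type*} [NonUnitalNormedRing A] [StarRing A] [CStarRing A]
    (a p q : A) (hp1 : star p = p) (hp2 : p * p = p) (hq1 : star q = q) (hq2 : q * q = q)
    (h : a = a * p * q) : a = a * p := by
  have hp : IsStarProjection p := ⟨hp2, hp1⟩
  exact ((hp.mul_eq_left_iff_mul_mul_star_eq a).mpr
    (mul_star_self_eq_of_eq_mul_mul hp.isSelfAdjoint ⟨hq2, hq1⟩ h)).symm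

/-- In a C*-algebra, if `a = a * p * q` for projections `p, q`, then `a = a * p`. -/
theorem cstar_apq {A : Type*} [NonUnitalNormedRing A] [StarRing A] [CStarRing A]
    [CompleteSpace A] [NormedSpace ℂ A] [IsScalarTower ℂ A A] [SMulCommClass ℂ A A]
    [StarModule ℂ A]
    (a p q : A) (hp1 : star p = p) (hp2 : p * p = p) (hq1 : star q = q) (hq2 : q * q = q)
    (h : a = a * p * q) : a = a * p :=
  cstar_apq_general a p q hp1 hp2 hq1 hq2 h
end

section
/- Let u and e be partial isometries in a C*-algebra A. Then (1/2)(u u* e + e u* u) = u holds if and only if u = u u* e and u = e u* u. -/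
/-!
With `p = u u*` and `q = u* u`, which are idempotents satisfying `p u = u = u q`, multiplying
`p e + e q = 2 u` by `p` on the left and by `q` on the right gives `p e + p e q = 2 u = p e q + e q`,
hence `p e = e q`, and then both equal `u`.
-/

section Semigroup

variable {S : Type*} [Semigroup S] {a b : S}

theorem isIdempotentElem_mul_of_mul_mul_eq_self (h : a * b * a = a) :
    IsIdempotentElem (a * b) := by
  rw [IsIdempotentElem, ← mul_assoc, h]

theorem isIdempotentElem_mul_swap_of_mul_mul_eq_self (h : a * b * a = a) :
    IsIdempotentElem (b * a) := by
  rw [IsIdempotentElem, mul_assoc, ← mul_assoc a, h]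

end Semigroup

theorem mul_eq_mul_of_add_eq_add_self {R : Type*} [NonUnitalRing R] {p q u e : R}
    (hp : IsIdempotentElem p) (hq : IsIdempotentElem q) (hpu : p * u = u) (huq : u * q = u)
    (h : p * e + e * q = u + u) : p * e = e * q := by
  have hleft : p * e + p * e * q = u + u := by
    simpa only [mul_add, ← mul_assoc, hp.eq, hpu] using congrArg (p * ·) h
  have hright : p * e * q + e * q = u + u := by
    simpa only [add_mul, mul_assoc, hq.eq, huq] using congrArg (· * q) h
  have hboth := hleft.trans hright.symm
  rw [add_comm (p * e * q)] at hboth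
  exact add_right_cancel hboth

variable {A : Type*} [NonUnitalNormedRing A] [StarRing A] [CStarRing A]
    [CompleteSpace A] [NormedSpace ℂ A] [IsScalarTower ℂ A A] [SMulCommClass ℂ A A]
    [StarModule ℂ A]

theorem partialIsometry_half_sum_iff_general
    (u e : A) (hu : u * star u * u = u) :
    ((1 / 2 : ℂ) • (u * star u * e + e * (star u * u)) = u) ↔
    (u = u * star u * e ∧ u = e * (star u * u)) := by
  rw [one_div, inv_smul_eq_iff₀ two_ne_zero]
  constructor
  · intro h
    have hcomm : u * star u * e = e * (star u * u) :=
      mul_eq_mul_of_add_eq_add_self (isIdempotentElem_mul_of_mul_mul_eq_self hu)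
        (isIdempotentElem_mul_swap_of_mul_mul_eq_self hu) hu (by rw [← mul_assoc, hu])
        (by rw [h, two_smul])
    have hpe : u * star u * e = u :=
      smul_right_injective A (two_ne_zero : (2 : ℂ) ≠ 0)
        (by simpa only [← hcomm, ← two_smul ℂ] using h)
    exact ⟨hpe.symm, (hcomm ▸ hpe).symm⟩
  · rintro ⟨hpe, heq⟩
    rw [← hpe, ← heq, two_smul]

/-- For partial isometries `u, e`: `(1/2)(u u* e + e u* u) = u` iff
`u = u u* e` and `u = e u* u`. -/
theorem partialIsometry_half_sum_iff
    (u e : A) (hu : u * star u * u = u) (he : e * star e * e = e) :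
    ((1 / 2 : ℂ) • (u * star u * e + e * (star u * u)) = u) ↔
    (u = u * star u * e ∧ u = e * (star u * u)) :=
  partialIsometry_half_sum_iff_general u e hu
end

section
/- Let u and e be partial isometries in a C*-algebra A. Then u e* = 0 and e* u = 0 hold if and only if both u + e and u − e are partial isometries. -/
/-!
Expanding the cubes, `(u ± e)(u ± e)*(u ± e) = u u* u ± e e* e ± P + Q`, where `P` and `Q` collect
the cross terms of degree two in `u`, resp. in `e`. So for partial isometries `u, e` both `u + e`
and `u - e` are partial isometries iff `P = Q = 0`; orthogonality visibly kills both. Conversely,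
`Q = e e* u + e u* e + u e* e = 0` first forces `e e* u = u e* e =: y`, so `e e* y = y e* e = y`,
and then `e y* e = -2 y`. Applying `y ↦ e y* e` twice gives back `y`, so `y = 4 y`, whence `y = 0`,
and `u e* = y e* = 0`, `e* u = e* y = 0`.
-/

section StarRing

variable {R : Type*} [NonUnitalRing R] [StarRing R]

def cubeCrossTerm (a b : R) : R := a * star a * b + a * star b * a + b * star a * a

theorem add_mul_star_add_mul_add (a b : R) :
    (a + b) * star (a + b) * (a + b) =
      a * star a * a + b * star b * b + cubeCrossTerm a b + cubeCrossTerm b a := by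
  simp only [cubeCrossTerm, star_add]; noncomm_ring

theorem sub_mul_star_sub_mul_sub (a b : R) :
    (a - b) * star (a - b) * (a - b) =
      a * star a * a - b * star b * b - cubeCrossTerm a b + cubeCrossTerm b a := by
  simp only [cubeCrossTerm, star_sub]; noncomm_ring

theorem cubeCrossTerm_eq_zero_of_mul_star_eq_zero {a b : R} (hab : a * star b = 0)
    (hba : star b * a = 0) : cubeCrossTerm a b = 0 ∧ cubeCrossTerm b a = 0 := by
  have hba' : b * star a = 0 := by simpa using congrArg star hab
  have hab' : star a * b = 0 := by simpa using congrArg star hba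
  constructor
  · rw [cubeCrossTerm, mul_assoc a (star a), hab', hab, hba']; simp
  · rw [cubeCrossTerm, mul_assoc b (star b), hba, hba', hab]; simp

theorem mul_star_mul_eq_of_cubeCrossTerm_eq_zero {e x : R} (he : e * star e * e = e)
    (hx : cubeCrossTerm e x = 0) : e * star e * x = x * star e * e := by
  have hsxr : e * star e * x * (star e * e) = x * star e * e := by
    rw [← sub_eq_zero, ← neg_eq_zero]
    calc _ = cubeCrossTerm e x - e * star e * cubeCrossTerm e x
          + (e * star e * e - e) * (star x * e) + (e * star e * e - e) * (star e * x) := by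
          rw [cubeCrossTerm]; noncomm_ring
      _ = 0 := by rw [hx, he]; simp
  rw [← hsxr, ← sub_eq_zero]
  calc _ = cubeCrossTerm e x - cubeCrossTerm e x * (star e * e)
        + e * star x * (e * star e * e - e) + x * star e * (e * star e * e - e) := by
        rw [cubeCrossTerm]; noncomm_ring
    _ = 0 := by rw [hx, he]; simp

variable [IsAddTorsionFree R]

theorem eq_zero_of_mul_star_mul_add_two_nsmul_eq_zero {e y : R} (hl : e * star e * y = y)
    (hr : y * (star e * e) = y) (hy : e * star y * e + 2 • y = 0) : y = 0 := by
  have hneg : e * star y * e = -(2 • y) := eq_neg_of_add_eq_zero_left hy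
  have h4 : y = 4 • y :=
    calc y = e * star e * y * (star e * e) := by rw [hl, hr]
      _ = e * star (e * star y * e) * e := by simp only [star_mul, star_star]; noncomm_ring
      _ = e * star (-(2 • y)) * e := by rw [hneg]
      _ = -(2 • (e * star y * e)) := by
          rw [star_neg, star_nsmul, mul_neg, neg_mul, mul_smul_comm, smul_mul_assoc]
      _ = 4 • y := by rw [hneg, smul_neg, neg_neg, smul_smul]; rfl
  rw [show 4 = 3 + 1 from rfl, succ_nsmul] at h4
  exact (nsmul_eq_zero_iff_right three_ne_zero).mp (add_eq_right.mp h4.symm)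

theorem mul_star_eq_zero_of_cubeCrossTerm_eq_zero {e x : R} (he : e * star e * e = e)
    (hx : cubeCrossTerm e x = 0) : x * star e = 0 ∧ star e * x = 0 := by
  have he' : star e * e * star e = star e := by simpa [mul_assoc] using congrArg star he
  have hsx := mul_star_mul_eq_of_cubeCrossTerm_eq_zero he hx
  have hy : x * star e * e = 0 := by
    refine eq_zero_of_mul_star_mul_add_two_nsmul_eq_zero (e := e) ?_ ?_ ?_
    · rw [← hsx, ← mul_assoc, ← mul_assoc, he]
    · simp only [mul_assoc] at he ⊢; rw [he]
    · calc _ = e * star e * e * star x * e + 2 • (x * star e * e) := by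
            simp only [star_mul, star_star]; noncomm_ring
        _ = cubeCrossTerm e x := by rw [he, cubeCrossTerm, hsx, two_nsmul]; abel
        _ = 0 := hx
  constructor
  · calc x * star e = x * star e * e * star e := by
          rw [mul_assoc (x * star e), mul_assoc x, ← mul_assoc (star e) e, he']
      _ = 0 := by rw [hy, zero_mul]
  · calc star e * x = star e * (e * star e * x) := by rw [← mul_assoc, ← mul_assoc, he']
      _ = 0 := by rw [hsx, hy, mul_zero]

theorem cubeCrossTerm_eq_zero_of_add_of_sub {a b : R} (ha : a * star a * a = a)
    (hadd : (a + b) * star (a + b) * (a + b) = a + b)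
    (hsub : (a - b) * star (a - b) * (a - b) = a - b) : cubeCrossTerm b a = 0 := by
  have h := congrArg₂ (· + ·) hadd hsub
  simp only [add_mul_star_add_mul_add, sub_mul_star_sub_mul_sub, ha] at h
  rw [← two_nsmul_eq_zero, two_nsmul, ← sub_eq_zero.mpr h]
  abel

end StarRing

variable {A : Type*} [NonUnitalNormedRing A] [StarRing A] [CStarRing A]
    [CompleteSpace A] [NormedSpace ℂ A] [IsScalarTower ℂ A A] [SMulCommClass ℂ A A]
    [StarModule ℂ A]

/-- For partial isometries `u, e`: `u e* = 0` and `e* u = 0` iff both `u + e`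
and `u - e` are partial isometries. -/
theorem partialIsometry_orthogonal_iff_sum_diff
    (u e : A) (hu : u * star u * u = u) (he : e * star e * e = e) :
    (u * star e = 0 ∧ star e * u = 0) ↔
    ((u + e) * star (u + e) * (u + e) = u + e ∧
      (u - e) * star (u - e) * (u - e) = u - e) := by
  have : IsAddTorsionFree A := .of_isTorsionFree ℂ A
  constructor
  · rintro ⟨hue, heu⟩
    obtain ⟨h₁, h₂⟩ := cubeCrossTerm_eq_zero_of_mul_star_eq_zero hue heu
    rw [add_mul_star_add_mul_add, sub_mul_star_sub_mul_sub, hu, he, h₁, h₂]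
    constructor <;> abel
  · rintro ⟨hadd, hsub⟩
    exact mul_star_eq_zero_of_cubeCrossTerm_eq_zero he
      (cubeCrossTerm_eq_zero_of_add_of_sub hu hadd hsub)
end

section
/- Let H be a finite-dimensional complex Hilbert space with a distinguished orthonormal basis, and for x ∈ H let x̄ denote coordinatewise conjugation. Define the spin triple product {x,y,z} = ⟨x,y⟩z + ⟨z,y⟩x − ⟨x, z̄⟩ȳ. If u ∈ H is a nonzero element with {u,u,u} = u, then either ū is a scalar multiple of u, or ⟨u, ū⟩ = 0 and ⟨u,u⟩ = 1/2. -/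
open scoped ComplexConjugate

/-- Inner product on `ℂ^n`, linear in the first variable. -/
noncomputable def spinIp {n : ℕ} (x y : Fin n → ℂ) : ℂ := ∑ i, x i * conj (y i)

/-- Coordinatewise conjugation on `ℂ^n`. -/
noncomputable def spinConj {n : ℕ} (x : Fin n → ℂ) : Fin n → ℂ := fun i => conj (x i)

/-- The spin triple product `{x,y,z} = ⟨x,y⟩z + ⟨z,y⟩x − ⟨x, z̄⟩ȳ`. -/
noncomputable def spinTriple {n : ℕ} (x y z : Fin n → ℂ) : Fin n → ℂ :=
  spinIp x y • z + spinIp z y • x - spinIp x (spinConj z) • spinConj y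

/-! A tripotent satisfies `(2⟨u,u⟩ - 1) u = ⟨u,ū⟩ ū`. If `⟨u,ū⟩ ≠ 0` this exhibits `ū` as a
multiple of `u`; otherwise the left side vanishes, and since `u ≠ 0` we get `⟨u,u⟩ = 1/2`. -/

theorem spinTriple_self {n : ℕ} (u : Fin n → ℂ) :
    spinTriple u u u = (2 * spinIp u u) • u - spinIp u (spinConj u) • spinConj u := by
  rw [spinTriple, two_mul, add_smul]

theorem spinTriple_self_eq_self_iff {n : ℕ} (u : Fin n → ℂ) :
    spinTriple u u u = u ↔
      (2 * spinIp u u - 1) • u = spinIp u (spinConj u) • spinConj u := by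
  rw [spinTriple_self, sub_smul, one_smul, sub_eq_iff_eq_add, sub_eq_iff_eq_add', add_comm]

/-- A nonzero tripotent of the spin factor is either a multiple of a real vector
(`ū` is a scalar multiple of `u`) or minimal (`⟨u, ū⟩ = 0` and `⟨u,u⟩ = 1/2`). -/
theorem spin_tripotent_dichotomy {n : ℕ} (u : Fin n → ℂ) (hu0 : u ≠ 0)
    (hu : spinTriple u u u = u) :
    (∃ α : ℂ, spinConj u = α • u) ∨
    (spinIp u (spinConj u) = 0 ∧ spinIp u u = 1 / 2) := by
  have key := (spinTriple_self_eq_self_iff u).mp hu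
  by_cases hb : spinIp u (spinConj u) = 0
  · right
    rw [hb, zero_smul, smul_eq_zero] at key
    have ha : 2 * spinIp u u - 1 = 0 := key.resolve_right hu0
    exact ⟨hb, by linear_combination ha / 2⟩
  · left
    refine ⟨(spinIp u (spinConj u))⁻¹ * (2 * spinIp u u - 1), ?_⟩
    rw [mul_smul, key, inv_smul_smul₀ hb]
end

section
/- In the spin factor ℂ^n (n ≥ 2) with triple product {x,y,z} = ⟨x,y⟩z + ⟨z,y⟩x − ⟨x, z̄⟩ȳ, let u and e be nonzero tripotents that are minimal, i.e., ⟨u, ū⟩ = 0 and ⟨e, ē⟩ = 0 (so ⟨u,u⟩ = ⟨e,e⟩ = 1/2). Then {u, u, e} = 0 if and only if e = α ū for some complex number α with |α| = 1. -/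
open scoped ComplexConjugate

/-!
A tripotent satisfies `v = {v, v, v} = 2⟨v, v⟩ v - ⟨v, v̄⟩ v̄`, so a nonzero minimal one has
`⟨v, v⟩ = 1/2`. For minimal `u` this gives `{u, u, e} = e/2 + ⟨e, u⟩ u - ⟨u, ē⟩ ū`. If this
vanishes, pairing with `u` kills `⟨e, u⟩`, so `e = α ū`, and `⟨e, e⟩ = |α|² ⟨u, u⟩` gives `|α| = 1`.
Conversely `{u, u, α ū} = α ⟨ū, u⟩ u = 0` because `⟨u, ū⟩ = 0`.
-/

section SpinFactor

variable {n : ℕ}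

lemma spinIp_smul_left (c : ℂ) (x y : Fin n → ℂ) :
    spinIp (c • x) y = c * spinIp x y := by
  simp [spinIp, Finset.mul_sum, mul_assoc]

lemma spinIp_smul_right (c : ℂ) (x y : Fin n → ℂ) :
    spinIp x (c • y) = conj c * spinIp x y := by
  simp only [spinIp, Pi.smul_apply, smul_eq_mul, map_mul, Finset.mul_sum]
  exact Finset.sum_congr rfl fun i _ => by ring

lemma spinIp_sub_left (x y z : Fin n → ℂ) :
    spinIp (x - y) z = spinIp x z - spinIp y z := by
  simp [spinIp, sub_mul, Finset.sum_sub_distrib]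

@[simp]
lemma spinConj_spinConj (x : Fin n → ℂ) : spinConj (spinConj x) = x := by
  funext i; simp [spinConj]

lemma spinConj_smul (c : ℂ) (x : Fin n → ℂ) :
    spinConj (c • x) = conj c • spinConj x := by
  funext i; simp [spinConj]

lemma spinIp_spinConj_spinConj (x y : Fin n → ℂ) :
    spinIp (spinConj x) (spinConj y) = conj (spinIp x y) := by
  simp [spinIp, spinConj, map_sum, mul_comm]

lemma spinIp_spinConj_left (x y : Fin n → ℂ) :
    spinIp (spinConj x) y = conj (spinIp x (spinConj y)) := by
  simp [spinIp, spinConj, map_sum]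

lemma spinTriple_self_self_self (x : Fin n → ℂ) :
    spinTriple x x x = (2 * spinIp x x) • x - spinIp x (spinConj x) • spinConj x := by
  rw [spinTriple, two_mul, add_smul]

lemma spinIp_self_eq_half {v : Fin n → ℂ} (hv0 : v ≠ 0) (hv : spinTriple v v v = v)
    (hvmin : spinIp v (spinConj v) = 0) : spinIp v v = 1 / 2 := by
  rw [spinTriple_self_self_self, hvmin, zero_smul, sub_zero] at hv
  have h : (2 * spinIp v v - 1) • v = 0 := by rw [sub_smul, hv, one_smul, sub_self]
  have h2 : 2 * spinIp v v - 1 = 0 := (smul_eq_zero.mp h).resolve_right hv0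
  linear_combination h2 / 2

lemma spinTriple_smul_spinConj (α : ℂ) (u : Fin n → ℂ) :
    spinTriple u u (α • spinConj u) = (α * conj (spinIp u (spinConj u))) • u := by
  rw [spinTriple, spinIp_smul_left, spinIp_spinConj_left, spinConj_smul, spinConj_spinConj,
    spinIp_smul_right, Complex.conj_conj]
  module

lemma spinIp_smul_spinConj_self (α : ℂ) (x : Fin n → ℂ) :
    spinIp (α • spinConj x) (α • spinConj x) = (‖α‖ : ℂ) ^ 2 * conj (spinIp x x) := by
  rw [spinIp_smul_left, spinIp_smul_right, spinIp_spinConj_spinConj, ← mul_assoc,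
    Complex.mul_conj']

lemma eq_smul_spinConj_of_spinTriple_eq_zero {u e : Fin n → ℂ} (huu : spinIp u u = 1 / 2)
    (humin : spinIp u (spinConj u) = 0) (h : spinTriple u u e = 0) :
    e = (2 * spinIp u (spinConj e)) • spinConj u := by
  have hcu : spinIp (spinConj u) u = 0 := by rw [spinIp_spinConj_left, humin, map_zero]
  have he : e = (2 * spinIp u (spinConj e)) • spinConj u - (2 * spinIp e u) • u := by
    rw [spinTriple, huu] at h
    linear_combination (norm := module) (2 : ℂ) • h
  have heu : spinIp e u = 0 := by
    have h' := congrArg (spinIp · u) he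
    simp only [spinIp_sub_left, spinIp_smul_left, hcu, huu] at h'
    linear_combination h' / 2
  rwa [heu, mul_zero, zero_smul, sub_zero] at he

end SpinFactor

theorem spin_minimal_orthogonal_iff_general {n : ℕ} (u e : Fin n → ℂ)
    (hu0 : u ≠ 0) (he0 : e ≠ 0)
    (hu : spinTriple u u u = u) (he : spinTriple e e e = e)
    (humin : spinIp u (spinConj u) = 0) (hemin : spinIp e (spinConj e) = 0) :
    spinTriple u u e = 0 ↔ ∃ α : ℂ, ‖α‖ = 1 ∧ e = α • spinConj u := by
  have huu := spinIp_self_eq_half hu0 hu humin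
  constructor
  · intro h
    have he_eq := eq_smul_spinConj_of_spinTriple_eq_zero huu humin h
    refine ⟨_, ?_, he_eq⟩
    have hee := spinIp_self_eq_half he0 he hemin
    rw [he_eq, spinIp_smul_spinConj_self, huu] at hee
    have hsq : (‖2 * spinIp u (spinConj e)‖ : ℂ) ^ 2 = 1 := by
      simpa [Complex.conj_ofNat] using hee
    exact (pow_eq_one_iff_of_nonneg (norm_nonneg _) two_ne_zero).mp (by exact_mod_cast hsq)
  · rintro ⟨α, -, rfl⟩
    rw [spinTriple_smul_spinConj, humin, map_zero, mul_zero, zero_smul]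

/-- Two minimal tripotents `u, e` of the spin factor are orthogonal iff
`e` is a unimodular multiple of `ū`. -/
theorem spin_minimal_orthogonal_iff {n : ℕ} (hn : 2 ≤ n) (u e : Fin n → ℂ)
    (hu0 : u ≠ 0) (he0 : e ≠ 0)
    (hu : spinTriple u u u = u) (he : spinTriple e e e = e)
    (humin : spinIp u (spinConj u) = 0) (hemin : spinIp e (spinConj e) = 0) :
    spinTriple u u e = 0 ↔ ∃ α : ℂ, ‖α‖ = 1 ∧ e = α • spinConj u :=
  spin_minimal_orthogonal_iff_general u e hu0 he0 hu he humin hemin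
end
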